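/- arXiv:1911.01781 — 4 statements merged into one kernel-verified Lean document; each statement's English description precedes it below -/
import Mathlib

section
/- Let Ω ⊆ ℝ^N be open and connected, p > 1, and let u, v : Ω → ℝ be differentiable functions with u(z) ≥ 0 and v(z) > 0 for all z ∈ Ω, such that z ↦ u(z)^p / v(z)^{p−1} is differentiable on Ω. Define R(u,v)(z) = ‖∇u(z)‖^p − ‖∇v(z)‖^{p−2} ⟨∇v(z), ∇(u^p / v^{p−1})(z)⟩. Then R(u,v)(z) = 0 for all z ∈ Ω if and only if there exists ξ ≥ 0 such that u(z) = ξ v(z) for all z ∈ Ω. -/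
/-!
Write `t = u / v`. The chain rule gives
`∇(u ^ p / v ^ (p - 1)) = p t ^ (p - 1) ∇u - (p - 1) t ^ p ∇v`, and then `R(u, v)` splits as
`(‖∇u‖ ^ p + (p - 1) (t ‖∇v‖) ^ p - p ‖∇u‖ (t ‖∇v‖) ^ (p - 1))
  + p t ^ (p - 1) ‖∇v‖ ^ (p - 2) (‖∇v‖ ‖∇u‖ - ⟪∇v, ∇u⟫)`.
The first bracket is nonnegative by Young's inequality, vanishing iff `‖∇u‖ = t ‖∇v‖`, and the
second by Cauchy–Schwarz. So `R(u, v) = 0` iff `∇u = t ∇v`, i.e. iff `∇(u / v) = 0`, which on a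
connected open set means that `u / v` is constant.
-/

open Real InnerProductSpace Filter
open scoped RealInnerProductSpace Gradient Topology

namespace Real

variable {p : ℝ}

theorem rpow_sub_one_rpow_conjExponent (hp : 1 < p) {B : ℝ} (hB : 0 ≤ B) :
    (B ^ (p - 1)) ^ p.conjExponent = B ^ p := by
  rw [← rpow_mul hB, conjExponent, mul_div_cancel₀ _ (sub_ne_zero.mpr hp.ne')]

theorem young_rpow_sub_one_le (hp : 1 < p) {A B : ℝ} (hA : 0 ≤ A) (hB : 0 ≤ B) :
    p * (A * B ^ (p - 1)) ≤ A ^ p + (p - 1) * B ^ p := by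
  have h := young_inequality_of_nonneg hA (rpow_nonneg hB (p - 1)) (.conjExponent hp)
  rwa [rpow_sub_one_rpow_conjExponent hp hB, conjExponent, div_div_eq_mul_div, ← add_div,
    le_div_iff₀ (by linarith), mul_comm, mul_comm (B ^ p)] at h

theorem young_rpow_sub_one_eq_iff (hp : 1 < p) {A B : ℝ} (hA : 0 ≤ A) (hB : 0 ≤ B) :
    p * (A * B ^ (p - 1)) = A ^ p + (p - 1) * B ^ p ↔ A = B := by
  have h := young_inequality_eq_iff_of_nonneg hA (rpow_nonneg hB (p - 1)) (.conjExponent hp)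
  rwa [rpow_sub_one_rpow_conjExponent hp hB, conjExponent, div_div_eq_mul_div, ← add_div,
    eq_div_iff (by linarith), mul_comm, mul_comm (B ^ p), rpow_left_inj hA hB (by linarith)] at h

end Real

variable {F : Type*} [NormedAddCommGroup F] [InnerProductSpace ℝ F]

/-- `R(u, v)` at a point, in terms of `a = ∇u`, `b = ∇v` and `t = u / v`. -/
noncomputable def piconeDefect (p t : ℝ) (a b : F) : ℝ :=
  ‖a‖ ^ p - ‖b‖ ^ (p - 2) * ⟪b, (p * t ^ (p - 1)) • a - ((p - 1) * t ^ p) • b⟫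

theorem piconeDefect_eq_young_add_cauchySchwarz {p t : ℝ} (hp : 1 < p) (ht : 0 ≤ t) (a b : F) :
    piconeDefect p t a b =
      (‖a‖ ^ p + (p - 1) * (t * ‖b‖) ^ p - p * (‖a‖ * (t * ‖b‖) ^ (p - 1))) +
        p * t ^ (p - 1) * ‖b‖ ^ (p - 2) * (‖b‖ * ‖a‖ - ⟪b, a⟫) := by
  have hb := norm_nonneg b
  have h1 : ‖b‖ ^ (p - 1) = ‖b‖ ^ (p - 2) * ‖b‖ := by
    rw [← rpow_add_one' hb (by linarith)]; ring_nf
  have h2 : ‖b‖ ^ p = ‖b‖ ^ (p - 2) * (‖b‖ * ‖b‖) := by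
    rw [← sq, ← rpow_two, ← rpow_add' hb (by linarith)]; ring_nf
  rw [piconeDefect, inner_sub_right, real_inner_smul_right, real_inner_smul_right,
    real_inner_self_eq_norm_mul_norm, mul_rpow ht hb, mul_rpow ht hb, h1, h2]
  ring

theorem piconeDefect_eq_zero_iff {p t : ℝ} (hp : 1 < p) (ht : 0 ≤ t) (a b : F) :
    piconeDefect p t a b = 0 ↔ a = t • b := by
  have hB : 0 ≤ t * ‖b‖ := mul_nonneg ht (norm_nonneg b)
  have hyoung := young_rpow_sub_one_le hp (norm_nonneg a) hB
  have hcs : 0 ≤ p * t ^ (p - 1) * ‖b‖ ^ (p - 2) * (‖b‖ * ‖a‖ - ⟪b, a⟫) :=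
    mul_nonneg (by positivity) (sub_nonneg.2 (real_inner_le_norm b a))
  have norm_smul_b : ‖t • b‖ = t * ‖b‖ := by rw [norm_smul, Real.norm_of_nonneg ht]
  rw [piconeDefect_eq_young_add_cauchySchwarz hp ht]
  constructor
  · intro h
    have hnorm : ‖a‖ = t * ‖b‖ := (young_rpow_sub_one_eq_iff hp (norm_nonneg a) hB).1 (by linarith)
    rcases (norm_nonneg a).eq_or_lt with ha | ha
    · rw [norm_eq_zero.1 ha.symm, eq_comm, ← norm_eq_zero, norm_smul_b, ← hnorm, ha]
    · have htb : 0 < t * ‖b‖ := hnorm ▸ ha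
      have hb : 0 < ‖b‖ := pos_of_mul_pos_right htb ht
      have htp : 0 < t := pos_of_mul_pos_left htb hb.le
      have hinner : ⟪b, a⟫ = ‖b‖ * ‖a‖ := by
        have hcoef : 0 < p * t ^ (p - 1) * ‖b‖ ^ (p - 2) := by positivity
        nlinarith
      have hsmul := inner_eq_norm_mul_iff_real.1 hinner
      rw [hnorm, mul_comm t, mul_smul] at hsmul
      exact smul_right_injective F hb.ne' hsmul.symm
  · rintro rfl
    rw [norm_smul_b, (young_rpow_sub_one_eq_iff hp hB hB).2 rfl, real_inner_smul_right,
      real_inner_self_eq_norm_mul_norm]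
    ring

section Gradient

variable [CompleteSpace F] {f g : F → ℝ} {f' g' z : F}

theorem HasGradientAt.const_mul (hf : HasGradientAt f f' z) (c : ℝ) :
    HasGradientAt (fun y => c * f y) (c • f') z := by
  rw [hasGradientAt_iff_hasFDerivAt, map_smul]
  exact (hasGradientAt_iff_hasFDerivAt.1 hf).const_mul c

theorem HasGradientAt.rpow_const (hf : HasGradientAt f f' z) {p : ℝ} (h : f z ≠ 0 ∨ 1 ≤ p) :
    HasGradientAt (fun y => f y ^ p) ((p * f z ^ (p - 1)) • f') z := by
  rw [hasGradientAt_iff_hasFDerivAt, map_smul]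
  exact (hasGradientAt_iff_hasFDerivAt.1 hf).rpow_const h

theorem HasGradientAt.div (hf : HasGradientAt f f' z) (hg : HasGradientAt g g' z) (hz : g z ≠ 0) :
    HasGradientAt (fun y => f y / g y) ((g z)⁻¹ • (f' - (f z / g z) • g')) z := by
  rw [hasGradientAt_iff_hasFDerivAt] at hf hg ⊢
  have hmul := hf.mul ((hasDerivAt_inv hz).comp_hasFDerivAt z hg)
  simp only [Pi.mul_def] at hmul
  simp only [div_eq_mul_inv]
  refine hmul.congr_fderiv (ContinuousLinearMap.ext fun x => ?_)
  simp only [add_apply, smul_apply, toDual_apply_apply,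
    Function.comp_apply, inner_smul_left, inner_sub_left, smul_eq_mul, RCLike.conj_to_real]
  field_simp
  ring

theorem hasGradientAt_rpow_div_rpow_sub_one {p : ℝ} (hp : 1 ≤ p) {u v : F → ℝ}
    (hu : DifferentiableAt ℝ u z) (hv : DifferentiableAt ℝ v z) (hu0 : 0 ≤ u z) (hv0 : 0 < v z) :
    HasGradientAt (fun y => u y ^ p / v y ^ (p - 1))
      ((p * (u z / v z) ^ (p - 1)) • ∇ u z - ((p - 1) * (u z / v z) ^ p) • ∇ v z) z := by
  have hvp : v z ^ (p - 1) * v z ^ (p - 1) = v z ^ (p - 1 - 1) * v z ^ p := by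
    rw [← rpow_add hv0, ← rpow_add hv0]; ring_nf
  convert (hu.hasGradientAt.rpow_const (Or.inr hp)).div
    (hv.hasGradientAt.rpow_const (Or.inl hv0.ne')) (rpow_pos_of_pos hv0 _).ne' using 1
  rw [div_rpow hu0 hv0.le, div_rpow hu0 hv0.le, smul_sub, smul_smul, smul_smul, smul_smul]
  have hvp1 := rpow_pos_of_pos hv0 (p - 1)
  have hvp2 := rpow_pos_of_pos hv0 (p - 1 - 1)
  congr 2
  · field_simp
  · field_simp
    linear_combination (p - 1) * u z ^ p * hvp

theorem IsOpen.gradient_eq_div_smul_iff_exists_eq_mul {Ω : Set F} (hΩ : IsOpen Ω)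
    (hconn : IsPreconnected Ω) {u v : F → ℝ} (hu : ∀ z ∈ Ω, DifferentiableAt ℝ u z)
    (hv : ∀ z ∈ Ω, DifferentiableAt ℝ v z) (hv0 : ∀ z ∈ Ω, v z ≠ 0) :
    (∀ z ∈ Ω, ∇ u z = (u z / v z) • ∇ v z) ↔ ∃ ξ : ℝ, ∀ z ∈ Ω, u z = ξ * v z := by
  constructor
  · intro hgrad
    have hquot : ∀ z ∈ Ω, HasFDerivAt (fun y => u y / v y) (0 : F →L[ℝ] ℝ) z := fun z hz => by
      simpa [hgrad z hz, hasGradientAt_iff_hasFDerivAt] using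
        (hu z hz).hasGradientAt.div (hv z hz).hasGradientAt (hv0 z hz)
    obtain ⟨ξ, hξ⟩ := hΩ.exists_is_const_of_fderiv_eq_zero hconn
      (fun z hz => (hquot z hz).differentiableAt.differentiableWithinAt)
      (fun z hz => (hquot z hz).fderiv)
    exact ⟨ξ, fun z hz => (div_eq_iff (hv0 z hz)).1 (hξ z hz)⟩
  · rintro ⟨ξ, hξ⟩ z hz
    have hloc : u =ᶠ[𝓝 z] fun y => ξ * v y := eventually_of_mem (hΩ.mem_nhds hz) hξ
    rw [hloc.gradient_eq, ((hv z hz).hasGradientAt.const_mul ξ).gradient, hξ z hz,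
      mul_div_cancel_right₀ _ (hv0 z hz)]

end Gradient

theorem picone_eq_iff_general {N : ℕ} (Ω : Set (EuclideanSpace ℝ (Fin N))) (hΩ : IsOpen Ω)
    (hconn : IsConnected Ω)
    (p : ℝ) (hp : 1 < p)
    (u v : EuclideanSpace ℝ (Fin N) → ℝ)
    (hu : ∀ z ∈ Ω, DifferentiableAt ℝ u z)
    (hv : ∀ z ∈ Ω, DifferentiableAt ℝ v z)
    (hunn : ∀ z ∈ Ω, 0 ≤ u z)
    (hvpos : ∀ z ∈ Ω, 0 < v z) :
    (∀ z ∈ Ω,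
      ‖gradient u z‖ ^ p -
        ‖gradient v z‖ ^ (p - 2) *
          (inner ℝ (gradient v z) (gradient (fun z => u z ^ p / v z ^ (p - 1)) z) : ℝ) = 0)
    ↔ ∃ ξ : ℝ, 0 ≤ ξ ∧ ∀ z ∈ Ω, u z = ξ * v z := by
  calc _ ↔ ∀ z ∈ Ω, gradient u z = (u z / v z) • gradient v z := forall₂_congr fun z hz => by
        rw [(hasGradientAt_rpow_div_rpow_sub_one hp.le (hu z hz) (hv z hz) (hunn z hz)
          (hvpos z hz)).gradient]
        exact piconeDefect_eq_zero_iff hp (div_nonneg (hunn z hz) (hvpos z hz).le) _ _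
    _ ↔ ∃ ξ : ℝ, ∀ z ∈ Ω, u z = ξ * v z :=
        hΩ.gradient_eq_div_smul_iff_exists_eq_mul hconn.isPreconnected hu hv
          fun z hz => (hvpos z hz).ne'
    _ ↔ ∃ ξ : ℝ, 0 ≤ ξ ∧ ∀ z ∈ Ω, u z = ξ * v z := by
        refine ⟨fun ⟨ξ, hξ⟩ => ?_, fun ⟨ξ, _, hξ⟩ => ⟨ξ, hξ⟩⟩
        obtain ⟨z, hz⟩ := hconn.nonempty
        have := hunn z hz
        rw [hξ z hz] at this
        exact ⟨ξ, nonneg_of_mul_nonneg_left this (hvpos z hz), hξ⟩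

/-- Equality case in the nonlinear Picone identity on a connected open set `Ω`:
`R(u,v) ≡ 0` on `Ω` iff `u = ξ v` on `Ω` for some `ξ ≥ 0`. -/
theorem picone_eq_iff {N : ℕ} (Ω : Set (EuclideanSpace ℝ (Fin N))) (hΩ : IsOpen Ω)
    (hconn : IsConnected Ω)
    (p : ℝ) (hp : 1 < p)
    (u v : EuclideanSpace ℝ (Fin N) → ℝ)
    (hu : ∀ z ∈ Ω, DifferentiableAt ℝ u z)
    (hv : ∀ z ∈ Ω, DifferentiableAt ℝ v z)
    (hunn : ∀ z ∈ Ω, 0 ≤ u z)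
    (hvpos : ∀ z ∈ Ω, 0 < v z)
    (hw : ∀ z ∈ Ω, DifferentiableAt ℝ (fun z => u z ^ p / v z ^ (p - 1)) z) :
    (∀ z ∈ Ω,
      ‖gradient u z‖ ^ p -
        ‖gradient v z‖ ^ (p - 2) *
          (inner ℝ (gradient v z) (gradient (fun z => u z ^ p / v z ^ (p - 1)) z) : ℝ) = 0)
    ↔ ∃ ξ : ℝ, 0 ≤ ξ ∧ ∀ z ∈ Ω, u z = ξ * v z :=
  picone_eq_iff_general Ω hΩ hconn p hp u v hu hv hunn hvpos
end

section
/- Let p > 1, let a, b be vectors in a real inner product space, and let s ≥ 0. Then ‖a‖^p − p s^{p−1} ‖b‖^{p−2} ⟨b, a⟩ + (p−1) s^p ‖b‖^p ≥ 0. Moreover, if b ≠ 0, then equality holds if and only if a = s b. -/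
/-!
Write `A = ‖a‖` and `B = s ‖b‖`. The expression splits as
`(A^p + (p-1) B^p - p A B^(p-1)) + p s^(p-1) ‖b‖^(p-2) (‖b‖ ‖a‖ - ⟪b, a⟫)`.
The first summand is the tangent-line inequality for the strictly convex function `x ↦ x^p`
(Bernoulli's inequality after scaling by `B^p`), vanishing only at `A = B`; the second is
Cauchy–Schwarz, vanishing for `s > 0` only when `a` is a nonnegative multiple of `b`.
-/

open Real

open scoped RealInnerProductSpace

namespace Real

variable {p x A B : ℝ}

theorem self_mul_rpow_sub_one (hx : 0 ≤ x) (hp : p ≠ 0) : x * x ^ (p - 1) = x ^ p := by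
  rw [mul_comm, ← rpow_add_one' hx (by simpa using hp), sub_add_cancel]

theorem mul_mul_rpow_sub_one_lt (hp : 1 < p) (hA : 0 ≤ A) (hB : 0 ≤ B) (hAB : A ≠ B) :
    p * (A * B ^ (p - 1)) < A ^ p + (p - 1) * B ^ p := by
  rcases hB.eq_or_lt with rfl | hB
  · rw [zero_rpow (by linarith), zero_rpow (by linarith)]
    simpa using rpow_pos_of_pos (lt_of_le_of_ne hA hAB.symm) p
  set t := A / B
  have hA_eq : A = t * B := (div_mul_cancel₀ A hB.ne').symm
  have ht : 0 ≤ t := div_nonneg hA hB.le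
  have ht_ne : t - 1 ≠ 0 := by
    rw [sub_ne_zero, Ne, div_eq_one_iff_eq hB.ne']
    exact hAB
  have bernoulli : 1 + p * (t - 1) < (1 + (t - 1)) ^ p :=
    one_add_mul_self_lt_rpow_one_add (by linarith) ht_ne hp
  rw [add_sub_cancel] at bernoulli
  have hBp : 0 < B ^ p := rpow_pos_of_pos hB p
  rw [hA_eq, mul_rpow ht hB.le, mul_assoc, self_mul_rpow_sub_one hB.le (by linarith)]
  nlinarith [mul_lt_mul_of_pos_right bernoulli hBp]

theorem mul_mul_rpow_sub_one_le (hp : 1 < p) (hA : 0 ≤ A) (hB : 0 ≤ B) :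
    p * (A * B ^ (p - 1)) ≤ A ^ p + (p - 1) * B ^ p := by
  rcases eq_or_ne A B with rfl | hAB
  · rw [self_mul_rpow_sub_one hA (by linarith)]
    linarith
  · exact (mul_mul_rpow_sub_one_lt hp hA hB hAB).le

theorem mul_mul_rpow_sub_one_eq_iff (hp : 1 < p) (hA : 0 ≤ A) (hB : 0 ≤ B) :
    p * (A * B ^ (p - 1)) = A ^ p + (p - 1) * B ^ p ↔ A = B := by
  refine ⟨fun h => ?_, fun h => ?_⟩
  · by_contra hAB
    exact (mul_mul_rpow_sub_one_lt hp hA hB hAB).ne h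
  · rw [h, self_mul_rpow_sub_one hB (by linarith)]
    ring

end Real

theorem eq_smul_of_inner_eq_norm_mul {E : Type*} [NormedAddCommGroup E] [InnerProductSpace ℝ E]
    {a b : E} {s : ℝ} (hb : b ≠ 0) (hinner : ⟪b, a⟫ = ‖b‖ * ‖a‖) (hnorm : ‖a‖ = s * ‖b‖) :
    a = s • b := by
  have hsmul : ‖a‖ • b = ‖b‖ • a := inner_eq_norm_mul_iff_real.mp hinner
  refine smul_right_injective E (norm_ne_zero_iff.mpr hb) (?_ : ‖b‖ • a = ‖b‖ • (s • b))
  rw [← hsmul, hnorm, mul_comm, mul_smul]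

section Picone

variable {E : Type*} [NormedAddCommGroup E] [InnerProductSpace ℝ E]

/-- The integrand `L(u, v)` of Picone's identity at a point, with `a = ∇u`, `b = ∇v`, `s = u / v`;
for `p < 2` the factor `‖b‖ ^ (p - 2)` is the junk value `0` at `b = 0`. -/
noncomputable def piconeGap (p s : ℝ) (a b : E) : ℝ :=
  ‖a‖ ^ p - p * s ^ (p - 1) * (‖b‖ ^ (p - 2) * ⟪b, a⟫) + (p - 1) * s ^ p * ‖b‖ ^ p

variable {p s : ℝ} {a b : E}

theorem piconeGap_eq (hp : 1 < p) (hs : 0 ≤ s) :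
    piconeGap p s a b =
      (‖a‖ ^ p + (p - 1) * (s * ‖b‖) ^ p - p * (‖a‖ * (s * ‖b‖) ^ (p - 1))) +
        p * s ^ (p - 1) * ‖b‖ ^ (p - 2) * (‖b‖ * ‖a‖ - ⟪b, a⟫) := by
  have hb : ‖b‖ * ‖b‖ ^ (p - 2) = ‖b‖ ^ (p - 1) := by
    rw [show p - 2 = p - 1 - 1 by ring, self_mul_rpow_sub_one (norm_nonneg b) (by linarith)]
  rw [piconeGap, mul_rpow hs (norm_nonneg b), mul_rpow hs (norm_nonneg b), ← hb]
  ring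

theorem piconeGap_nonneg (hp : 1 < p) (hs : 0 ≤ s) : 0 ≤ piconeGap p s a b := by
  rw [piconeGap_eq hp hs]
  have young := mul_mul_rpow_sub_one_le hp (norm_nonneg a) (mul_nonneg hs (norm_nonneg b))
  have cauchySchwarz : 0 ≤ ‖b‖ * ‖a‖ - ⟪b, a⟫ := sub_nonneg.mpr (real_inner_le_norm b a)
  have hcoeff : 0 ≤ p * s ^ (p - 1) * ‖b‖ ^ (p - 2) := by positivity
  nlinarith [mul_nonneg hcoeff cauchySchwarz]

theorem piconeGap_eq_zero_iff (hp : 1 < p) (hs : 0 ≤ s) (hb : b ≠ 0) :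
    piconeGap p s a b = 0 ↔ a = s • b := by
  have hsb : 0 ≤ s * ‖b‖ := mul_nonneg hs (norm_nonneg b)
  have young := mul_mul_rpow_sub_one_le hp (norm_nonneg a) hsb
  have cauchySchwarz : 0 ≤ ‖b‖ * ‖a‖ - ⟪b, a⟫ := sub_nonneg.mpr (real_inner_le_norm b a)
  rw [piconeGap_eq hp hs]
  constructor
  · intro h
    have hcoeff : 0 ≤ p * s ^ (p - 1) * ‖b‖ ^ (p - 2) := by positivity
    obtain ⟨hyoung, hcs⟩ :=
      (add_eq_zero_iff_of_nonneg (by linarith) (mul_nonneg hcoeff cauchySchwarz)).mp h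
    have hnorm : ‖a‖ = s * ‖b‖ :=
      (mul_mul_rpow_sub_one_eq_iff hp (norm_nonneg a) hsb).mp (by linarith)
    rcases hs.eq_or_lt with rfl | hs_pos
    · rw [zero_mul, norm_eq_zero] at hnorm
      rw [hnorm, zero_smul]
    · have hcoeff_pos : 0 < p * s ^ (p - 1) * ‖b‖ ^ (p - 2) := by
        have := norm_pos_iff.mpr hb
        have := rpow_pos_of_pos hs_pos (p - 1)
        positivity
      have hinner : ⟪b, a⟫ = ‖b‖ * ‖a‖ := by
        rcases mul_eq_zero.mp hcs with h0 | h0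
        · exact absurd h0 hcoeff_pos.ne'
        · linarith
      exact eq_smul_of_inner_eq_norm_mul hb hinner hnorm
  · rintro rfl
    have hnorm : ‖s • b‖ = s * ‖b‖ := by rw [norm_smul, norm_of_nonneg hs]
    have hinner : ⟪b, s • b⟫ = s * (‖b‖ * ‖b‖) := by
      rw [real_inner_smul_right, real_inner_self_eq_norm_mul_norm]
    rw [hnorm, hinner, (mul_mul_rpow_sub_one_eq_iff hp hsb hsb).mpr rfl]
    ring

end Picone

/-- Algebraic core of the nonlinear Picone identity: for `p > 1`, vectors `a, b` in a real
inner product space and `s ≥ 0`,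
`‖a‖^p − p s^{p−1} ‖b‖^{p−2} ⟨b, a⟩ + (p−1) s^p ‖b‖^p ≥ 0`,
with equality (for `b ≠ 0`) iff `a = s • b`. -/
theorem picone_pointwise {E : Type*} [NormedAddCommGroup E] [InnerProductSpace ℝ E]
    (p : ℝ) (hp : 1 < p) (a b : E) (s : ℝ) (hs : 0 ≤ s) :
    0 ≤ ‖a‖ ^ p - p * s ^ (p - 1) * (‖b‖ ^ (p - 2) * (inner ℝ b a : ℝ)) +
        (p - 1) * s ^ p * ‖b‖ ^ p ∧
    (b ≠ 0 →
      (‖a‖ ^ p - p * s ^ (p - 1) * (‖b‖ ^ (p - 2) * (inner ℝ b a : ℝ)) +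
          (p - 1) * s ^ p * ‖b‖ ^ p = 0 ↔ a = s • b)) :=
  ⟨piconeGap_nonneg hp hs, fun hb => piconeGap_eq_zero_iff hp hs hb⟩
end

section
/- Let (Ω, μ) be a measure space, 1 < p < ∞, η ∈ ℝ, and let g, f : Ω × ℝ → ℝ satisfy: for every ρ > 0 there exists C_ρ > 0 such that |g(z,x)| + |f(z,x)| ≤ C_ρ for μ-a.e. z and all |x| ≤ ρ; for every ε > 0 there exists δ > 0 such that |g(z,x)| ≤ ε |x|^{p−1} for μ-a.e. z and all 0 < |x| ≤ δ; there exists q ∈ (1,p) such that for every ε > 0 there exists M > 0 with |g(z,x)| ≤ ε |x|^{q−1} for μ-a.e. z and all |x| ≥ M; for every ε > 0 there exists M > 0 with |f(z,x) − η|x|^{p−2}x| ≤ ε |x|^{p−1} for μ-a.e. z and all |x| ≥ M; and there exists ϑ ∈ L^∞(μ) such that for every ε > 0 there exists δ > 0 with f(z,x)·x ≤ (ϑ(z) + ε)|x|^p for μ-a.e. z and all |x| ≤ δ. Then for every λ > 0, every ε > 0 and every r > p there exists c₅ > 0 such that (λ g(z,x) + f(z,x))·x ≤ (ϑ(z) +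 (1+λ)ε) |x|^p + c₅ |x|^r for μ-a.e. z ∈ Ω and all x ∈ ℝ. -/
open MeasureTheory
open scoped NNReal

/-!
Split the line into three ranges of `|x|`. Near zero the small-`x` hypotheses on `g` and `f`
give the bound with no remainder at all. At infinity `g` is of lower order `|x|^q` and `f x · x`
is `η|x|^p + o(|x|^p)`, so the excess over `(ϑ + (1 + λ)ε)|x|^p` is at most `(|η| + ‖ϑ‖_∞)|x|^p`,
absorbed by `c|x|^r` because `r > p` and `|x| ≥ 1`. In between, everything is bounded, and a
bounded excess is absorbed by `c|x|^r` because `|x|^r` is bounded below away from zero.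
-/

theorem MeasureTheory.MemLp.exists_ae_norm_le_of_top {α E : Type*} [MeasurableSpace α]
    {μ : Measure α} [NormedAddCommGroup E] {f : α → E} (hf : MemLp f ⊤ μ) :
    ∃ K : ℝ≥0, ∀ᵐ z ∂μ, ‖f z‖ ≤ K := by
  obtain ⟨K, hK⟩ :=
    eLpNormEssSup_lt_top_iff_isBoundedUnder.1 (eLpNorm_exponent_top.symm.trans_lt hf.2)
  exact ⟨K, by filter_upwards [hK] with z hz using NNReal.coe_le_coe.2 hz⟩

section Pointwise

variable {lam ε θ η K C M p q a b x : ℝ}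

theorem mul_le_mul_abs_rpow_of_abs_le (hx : x ≠ 0) (h : |a| ≤ ε * |x| ^ (p - 1)) :
    a * x ≤ ε * |x| ^ p :=
  calc a * x ≤ |a| * |x| := abs_mul a x ▸ le_abs_self _
    _ ≤ ε * |x| ^ (p - 1) * |x| := mul_le_mul_of_nonneg_right h (abs_nonneg x)
    _ = ε * |x| ^ p := by
      rw [mul_assoc, ← Real.rpow_add_one (abs_ne_zero.2 hx), sub_add_cancel]

theorem abs_rpow_sub_two_mul_mul_self (hx : x ≠ 0) : |x| ^ (p - 2) * x * x = |x| ^ p := by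
  rw [mul_assoc, ← abs_mul_abs_self, ← mul_assoc, ← Real.rpow_add_one (abs_ne_zero.2 hx),
    ← Real.rpow_add_one (abs_ne_zero.2 hx)]
  ring_nf

theorem combination_mul_le_near_zero (hp : p ≠ 0) (hlam : 0 ≤ lam)
    (ha : 0 < |x| → |a| ≤ ε * |x| ^ (p - 1)) (hb : b * x ≤ (θ + ε) * |x| ^ p) :
    (lam * a + b) * x ≤ (θ + (1 + lam) * ε) * |x| ^ p := by
  rcases eq_or_ne x 0 with rfl | hx
  · simp [Real.zero_rpow hp]
  have hax := mul_le_mul_abs_rpow_of_abs_le hx (ha (abs_pos.2 hx))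
  calc (lam * a + b) * x = lam * (a * x) + b * x := by ring
    _ ≤ lam * (ε * |x| ^ p) + (θ + ε) * |x| ^ p :=
      add_le_add (mul_le_mul_of_nonneg_left hax hlam) hb
    _ = (θ + (1 + lam) * ε) * |x| ^ p := by ring

theorem combination_mul_le_of_bounded (hp : 0 ≤ p) (hlam : 0 ≤ lam) (hε : 0 ≤ ε) (hK : 0 ≤ K)
    (hθ : -K ≤ θ) (hab : |a| + |b| ≤ C) (hx : |x| ≤ M) :
    (lam * a + b) * x ≤ (θ + (1 + lam) * ε) * |x| ^ p + ((1 + lam) * C * M + K * M ^ p) := by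
  have hC : 0 ≤ C := (add_nonneg (abs_nonneg a) (abs_nonneg b)).trans hab
  have hcomb : (lam * a + b) * x ≤ (1 + lam) * C * M :=
    calc (lam * a + b) * x ≤ |lam * a + b| * |x| := abs_mul _ x ▸ le_abs_self _
      _ ≤ (lam * |a| + |b|) * |x| := mul_le_mul_of_nonneg_right
          ((abs_add_le _ _).trans (by rw [abs_mul, abs_of_nonneg hlam])) (abs_nonneg x)
      _ ≤ (1 + lam) * C * M := mul_le_mul (by nlinarith [abs_nonneg a, abs_nonneg b]) hx
          (abs_nonneg x) (mul_nonneg (by linarith) hC)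
  have hpow : K * |x| ^ p ≤ K * M ^ p :=
    mul_le_mul_of_nonneg_left (Real.rpow_le_rpow (abs_nonneg x) hx hp) hK
  have hcoef : 0 ≤ (θ + (1 + lam) * ε + K) * |x| ^ p :=
    mul_nonneg (by linarith [mul_nonneg hlam hε]) (Real.rpow_nonneg (abs_nonneg x) p)
  linarith

theorem combination_mul_le_at_infinity (hx : 1 ≤ |x|) (hqp : q ≤ p) (hlam : 0 ≤ lam)
    (hε : 0 ≤ ε) (hθ : -K ≤ θ) (ha : |a| ≤ ε * |x| ^ (q - 1))
    (hb : |b - η * (|x| ^ (p - 2) * x)| ≤ ε * |x| ^ (p - 1)) :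
    (lam * a + b) * x ≤ (θ + (1 + lam) * ε) * |x| ^ p + (|η| + K) * |x| ^ p := by
  have hx0 : x ≠ 0 := abs_pos.1 (one_pos.trans_le hx)
  have hax : a * x ≤ ε * |x| ^ p := (mul_le_mul_abs_rpow_of_abs_le hx0 ha).trans
    (mul_le_mul_of_nonneg_left (Real.rpow_le_rpow_of_exponent_le hx hqp) hε)
  have hbx : b * x ≤ ε * |x| ^ p + η * |x| ^ p := by
    have hsplit : b * x = (b - η * (|x| ^ (p - 2) * x)) * x + η * (|x| ^ (p - 2) * x * x) := by
      ring
    rw [hsplit, abs_rpow_sub_two_mul_mul_self hx0]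
    linarith [mul_le_mul_abs_rpow_of_abs_le hx0 hb]
  have hη : η * |x| ^ p ≤ (θ + |η| + K) * |x| ^ p :=
    mul_le_mul_of_nonneg_right (by linarith [le_abs_self η]) (Real.rpow_nonneg (abs_nonneg x) p)
  linarith [mul_le_mul_of_nonneg_left hax hlam]

end Pointwise

theorem exists_ae_le_add_mul_rpow_of_regions {Ω : Type*} [MeasurableSpace Ω] {μ : Measure Ω}
    {u v : Ω → ℝ → ℝ} {δ M A B p r : ℝ} (hδ : 0 < δ) (hM : 1 ≤ M) (hpr : p ≤ r) (hr : 0 ≤ r)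
    (hsmall : ∀ᵐ z ∂μ, ∀ x, |x| ≤ δ → u z x ≤ v z x)
    (hmid : ∀ᵐ z ∂μ, ∀ x, |x| ≤ M → u z x ≤ v z x + B)
    (hbig : ∀ᵐ z ∂μ, ∀ x, M ≤ |x| → u z x ≤ v z x + A * |x| ^ p) :
    ∃ c : ℝ, 0 < c ∧ ∀ᵐ z ∂μ, ∀ x, u z x ≤ v z x + c * |x| ^ r := by
  have hδr : 0 < δ ^ r := Real.rpow_pos_of_pos hδ r
  set c := |B| / δ ^ r + |A| + 1
  have hc : 0 < c := by positivity
  have hAc : A ≤ c := by linarith [le_abs_self A, div_nonneg (abs_nonneg B) hδr.le]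
  have hBc : B ≤ c * δ ^ r :=
    calc B ≤ |B| / δ ^ r * δ ^ r := by rw [div_mul_cancel₀ _ hδr.ne']; exact le_abs_self B
      _ ≤ c * δ ^ r := mul_le_mul_of_nonneg_right (by linarith [abs_nonneg A]) hδr.le
  refine ⟨c, hc, ?_⟩
  filter_upwards [hsmall, hmid, hbig] with z hsmall hmid hbig x
  have hxr : 0 ≤ |x| ^ r := Real.rpow_nonneg (abs_nonneg x) r
  rcases le_total |x| δ with hxδ | hδx
  · linarith [hsmall x hxδ, mul_nonneg hc.le hxr]
  rcases le_total |x| M with hxM | hMx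
  · have : c * δ ^ r ≤ c * |x| ^ r :=
      mul_le_mul_of_nonneg_left (Real.rpow_le_rpow hδ.le hδx hr) hc.le
    linarith [hmid x hxM]
  · have hx1 : 1 ≤ |x| := hM.trans hMx
    have : A * |x| ^ p ≤ c * |x| ^ r := calc
      A * |x| ^ p ≤ c * |x| ^ p :=
        mul_le_mul_of_nonneg_right hAc (Real.rpow_nonneg (abs_nonneg x) p)
      _ ≤ c * |x| ^ r := mul_le_mul_of_nonneg_left
        (Real.rpow_le_rpow_of_exponent_le hx1 hpr) hc.le
    linarith [hbig x hMx]

/-- Unilateral growth restriction (6) of the paper: under the quantitative forms of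
hypotheses H(g)(i)–(ii) and H(f)(i)–(iii), for every `λ > 0`, `ε > 0` and `r > p` there is
`c₅ > 0` with `(λ g(z,x) + f(z,x)) x ≤ (ϑ(z) + (1+λ)ε)|x|^p + c₅|x|^r` for a.e. `z`, all `x`. -/
theorem unilateral_growth_restriction {Ω : Type*} [MeasurableSpace Ω] (μ : Measure Ω)
    (p : ℝ) (hp : 1 < p) (η : ℝ) (g f : Ω → ℝ → ℝ)
    (hbdd : ∀ ρ : ℝ, 0 < ρ → ∃ C : ℝ, 0 < C ∧
      ∀ᵐ z ∂μ, ∀ x : ℝ, |x| ≤ ρ → |g z x| + |f z x| ≤ C)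
    (hg0 : ∀ ε : ℝ, 0 < ε → ∃ δ : ℝ, 0 < δ ∧
      ∀ᵐ z ∂μ, ∀ x : ℝ, 0 < |x| → |x| ≤ δ → |g z x| ≤ ε * |x| ^ (p - 1))
    (hginf : ∃ q : ℝ, 1 < q ∧ q < p ∧
      ∀ ε : ℝ, 0 < ε → ∃ M : ℝ, 0 < M ∧
        ∀ᵐ z ∂μ, ∀ x : ℝ, M ≤ |x| → |g z x| ≤ ε * |x| ^ (q - 1))
    (hfinf : ∀ ε : ℝ, 0 < ε → ∃ M : ℝ, 0 < M ∧
      ∀ᵐ z ∂μ, ∀ x : ℝ, M ≤ |x| →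
        |f z x - η * (|x| ^ (p - 2) * x)| ≤ ε * |x| ^ (p - 1))
    (ϑ : Ω → ℝ) (hϑ : MemLp ϑ ⊤ μ)
    (hf0 : ∀ ε : ℝ, 0 < ε → ∃ δ : ℝ, 0 < δ ∧
      ∀ᵐ z ∂μ, ∀ x : ℝ, |x| ≤ δ → f z x * x ≤ (ϑ z + ε) * |x| ^ p) :
    ∀ lam : ℝ, 0 < lam → ∀ ε : ℝ, 0 < ε → ∀ r : ℝ, p < r →
      ∃ c₅ : ℝ, 0 < c₅ ∧
        ∀ᵐ z ∂μ, ∀ x : ℝ,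
          (lam * g z x + f z x) * x ≤ (ϑ z + (1 + lam) * ε) * |x| ^ p + c₅ * |x| ^ r := by
  intro lam hlam ε hε r hpr
  obtain ⟨q, -, hqp, hginf⟩ := hginf
  obtain ⟨δ₁, hδ₁, hgδ⟩ := hg0 ε hε
  obtain ⟨δ₂, hδ₂, hfδ⟩ := hf0 ε hε
  obtain ⟨M₁, -, hgM⟩ := hginf ε hε
  obtain ⟨M₂, -, hfM⟩ := hfinf ε hε
  obtain ⟨K, hϑK⟩ := hϑ.exists_ae_norm_le_of_top
  set M := max (max M₁ M₂) 1
  obtain ⟨C, -, hC⟩ := hbdd M (lt_max_of_lt_right one_pos)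
  refine exists_ae_le_add_mul_rpow_of_regions (M := M) (A := |η| + K)
    (B := (1 + lam) * C * M + K * M ^ p) (lt_min hδ₁ hδ₂) (le_max_right _ 1) hpr.le
    (by linarith) ?_ ?_ ?_
  · filter_upwards [hgδ, hfδ] with z hg hf x hx
    exact combination_mul_le_near_zero (by linarith) hlam.le
      (fun hx0 => hg x hx0 (hx.trans (min_le_left _ _))) (hf x (hx.trans (min_le_right _ _)))
  · filter_upwards [hC, hϑK] with z hC hϑ x hx
    exact combination_mul_le_of_bounded (by linarith) hlam.le hε.le K.2
      (neg_le_of_abs_le hϑ) (hC x hx) hx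
  · filter_upwards [hgM, hfM, hϑK] with z hg hf hϑ x hx
    exact combination_mul_le_at_infinity ((le_max_right _ 1).trans hx) hqp.le hlam.le hε.le
      (neg_le_of_abs_le hϑ) (hg x (((le_max_left _ _).trans (le_max_left _ 1)).trans hx))
      (hf x (((le_max_right _ _).trans (le_max_left _ 1)).trans hx))
end

section
/- Let (Ω, μ) be a finite measure space, 1 < p < ∞, p' = p/(p−1), η ∈ ℝ and c > 0. Let f : ℝ → ℝ be continuous with |f(x)| ≤ c (1 + |x|^{p−1}) for all x ∈ ℝ and lim_{x→+∞} f(x)/x^{p−1} = η = lim_{x→−∞} f(x)/(|x|^{p−2}x). Let (uₙ) be measurable real-valued functions on Ω, (tₙ) positive reals with tₙ → +∞, and suppose there exist a measurable function y and w ∈ L^p(μ) such that uₙ(z)/tₙ → y(z) for μ-a.e. z ∈ Ω and |uₙ(z)/tₙ| ≤ w(z) for μ-a.e. z ∈ Ω and all n. Then ∫_Ω |f(uₙ(z))/tₙ^{p−1} − η |y(z)|^{p−2} y(z)|^{p'} dμ(z) → 0 as n → ∞, i.e. f(uₙ)/tₙ^{p−1} → η |y|^{p−2} y in L^{p'}(μ).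 -/
open MeasureTheory Filter Topology

/-!
Write `φ(x) = |x|^{p-2} x` (`oddRpow p x`). Pointwise, `f(uₙ)/tₙ^{p-1} = (f(uₙ)/φ(uₙ)) · φ(uₙ/tₙ)`
by homogeneity of `φ`; where `y ≠ 0` we have `|uₙ| → ∞`, so the first factor tends to `η` and the
second to `φ(y)`, while where `y = 0` the growth bound gives
`|f(uₙ)|/tₙ^{p-1} ≤ c (tₙ^{1-p} + |uₙ/tₙ|^{p-1}) → 0`.
The same growth bound dominates the integrand by `(c + (c + |η|)|w|^{p-1})^{p'}`, which is
integrable because `|w|^{p-1} ∈ L^{p/(p-1)}`, and dominated convergence concludes.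
-/

noncomputable def oddRpow (p x : ℝ) : ℝ := |x| ^ (p - 2) * x

section oddRpow

variable {p x : ℝ}

@[simp]
lemma oddRpow_zero (p : ℝ) : oddRpow p 0 = 0 := by simp [oddRpow]

lemma oddRpow_of_pos (hx : 0 < x) : oddRpow p x = x ^ (p - 1) := by
  rw [oddRpow, abs_of_pos hx, ← Real.rpow_add_one hx.ne', show p - 2 + 1 = p - 1 by ring]

lemma abs_oddRpow (hp : p ≠ 1) (x : ℝ) : |oddRpow p x| = |x| ^ (p - 1) := by
  rcases eq_or_ne x 0 with rfl | hx
  · simp [Real.zero_rpow (sub_ne_zero.2 hp)]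
  · rw [oddRpow, abs_mul, abs_of_nonneg (Real.rpow_nonneg (abs_nonneg x) _),
      ← Real.rpow_add_one (abs_ne_zero.2 hx), show p - 2 + 1 = p - 1 by ring]

lemma oddRpow_ne_zero (hx : x ≠ 0) : oddRpow p x ≠ 0 :=
  mul_ne_zero (Real.rpow_pos_of_pos (abs_pos.2 hx) _).ne' hx

lemma oddRpow_div {t : ℝ} (ht : 0 < t) : oddRpow p (x / t) = oddRpow p x / t ^ (p - 1) := by
  have htp : t ^ (p - 1) = t ^ (p - 2) * t := by
    rw [← Real.rpow_add_one ht.ne']; ring_nf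
  rw [oddRpow, oddRpow, abs_div, abs_of_pos ht, Real.div_rpow (abs_nonneg x) ht.le, htp,
    div_mul_div_comm]

lemma continuousAt_oddRpow (hx : x ≠ 0) : ContinuousAt (oddRpow p) x :=
  ((Real.continuousAt_rpow_const _ _ (Or.inl (abs_ne_zero.2 hx))).comp
    continuous_abs.continuousAt).mul continuousAt_id

end oddRpow

lemma tendsto_div_oddRpow_atBot_sup_atTop {f : ℝ → ℝ} {p η : ℝ}
    (htop : Tendsto (fun x => f x / x ^ (p - 1)) atTop (𝓝 η))
    (hbot : Tendsto (fun x => f x / oddRpow p x) atBot (𝓝 η)) :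
    Tendsto (fun x => f x / oddRpow p x) (atBot ⊔ atTop) (𝓝 η) :=
  tendsto_sup.2 ⟨hbot, htop.congr' <| (eventually_gt_atTop 0).mono fun x hx => by
    simp only [oddRpow_of_pos hx]⟩

lemma abs_div_rpow_le_of_growth {f : ℝ → ℝ} {c r : ℝ}
    (hgrowth : ∀ x, |f x| ≤ c * (1 + |x| ^ r)) (s : ℝ) {t : ℝ} (ht : 0 < t) :
    |f s / t ^ r| ≤ c * ((t ^ r)⁻¹ + |s / t| ^ r) := by
  have htr : 0 < t ^ r := Real.rpow_pos_of_pos ht r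
  calc |f s / t ^ r| = |f s| / t ^ r := by rw [abs_div, abs_of_pos htr]
    _ ≤ c * (1 + |s| ^ r) / t ^ r := div_le_div_of_nonneg_right (hgrowth s) htr.le
    _ = c * ((t ^ r)⁻¹ + |s / t| ^ r) := by
      rw [abs_div, abs_of_pos ht, Real.div_rpow (abs_nonneg s) ht.le]
      field_simp

lemma abs_div_rpow_sub_le_of_growth {f : ℝ → ℝ} {p c η : ℝ} (hp : 1 < p) (hc : 0 ≤ c)
    (hgrowth : ∀ x, |f x| ≤ c * (1 + |x| ^ (p - 1))) {s t y W : ℝ} (ht : 1 ≤ t)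
    (hs : |s / t| ≤ W) (hy : |y| ≤ W) :
    |f s / t ^ (p - 1) - η * oddRpow p y| ≤ c + (c + |η|) * W ^ (p - 1) := by
  have hr : 0 ≤ p - 1 := by linarith
  have hinv : (t ^ (p - 1))⁻¹ ≤ 1 := inv_le_one_of_one_le₀ (Real.one_le_rpow ht hr)
  have hsW : |s / t| ^ (p - 1) ≤ W ^ (p - 1) := Real.rpow_le_rpow (abs_nonneg _) hs hr
  have hyW : |η * oddRpow p y| ≤ |η| * W ^ (p - 1) := by
    rw [abs_mul, abs_oddRpow hp.ne']
    exact mul_le_mul_of_nonneg_left (Real.rpow_le_rpow (abs_nonneg _) hy hr) (abs_nonneg η)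
  calc |f s / t ^ (p - 1) - η * oddRpow p y|
      ≤ |f s / t ^ (p - 1)| + |η * oddRpow p y| := abs_sub _ _
    _ ≤ c * ((t ^ (p - 1))⁻¹ + |s / t| ^ (p - 1)) + |η| * W ^ (p - 1) :=
      add_le_add (abs_div_rpow_le_of_growth hgrowth s (by linarith)) hyW
    _ ≤ c + (c + |η|) * W ^ (p - 1) := by
      nlinarith [mul_le_mul_of_nonneg_left hinv hc, mul_le_mul_of_nonneg_left hsW hc]

section Rescaled

variable {ι : Type*} {l : Filter ι} {s t : ι → ℝ} {y : ℝ}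

lemma tendsto_atBot_sup_atTop_of_div_tendsto (hy : y ≠ 0) (ht : Tendsto t l atTop)
    (hs : Tendsto (fun i => s i / t i) l (𝓝 y)) : Tendsto s l (atBot ⊔ atTop) := by
  rw [← comap_abs_atTop, tendsto_comap_iff]
  refine (hs.abs.pos_mul_atTop (abs_pos.2 hy) ht).congr' ?_
  filter_upwards [ht.eventually_gt_atTop 0] with i hi
  simp [abs_div, abs_of_pos hi, div_mul_cancel₀ _ hi.ne']

lemma tendsto_div_rpow_zero_of_growth {f : ℝ → ℝ} {c r : ℝ} (hr : 0 < r)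
    (hgrowth : ∀ x, |f x| ≤ c * (1 + |x| ^ r)) (ht : Tendsto t l atTop)
    (hs : Tendsto (fun i => s i / t i) l (𝓝 0)) :
    Tendsto (fun i => f (s i) / t i ^ r) l (𝓝 0) := by
  have hbound : Tendsto (fun i => c * ((t i ^ r)⁻¹ + |s i / t i| ^ r)) l (𝓝 0) := by
    have hinv := ((tendsto_rpow_atTop hr).comp ht).inv_tendsto_atTop
    have habs := hs.abs.rpow_const (Or.inr hr.le)
    simpa [Real.zero_rpow hr.ne'] using (hinv.add habs).const_mul c
  refine squeeze_zero_norm' ?_ hbound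
  filter_upwards [ht.eventually_gt_atTop 0] with i hi
    using abs_div_rpow_le_of_growth hgrowth (s i) hi

lemma tendsto_div_rpow_of_div_tendsto_ne_zero {f : ℝ → ℝ} {p η : ℝ}
    (hlim : Tendsto (fun x => f x / oddRpow p x) (atBot ⊔ atTop) (𝓝 η)) (hy : y ≠ 0)
    (ht : Tendsto t l atTop) (hs : Tendsto (fun i => s i / t i) l (𝓝 y)) :
    Tendsto (fun i => f (s i) / t i ^ (p - 1)) l (𝓝 (η * oddRpow p y)) := by
  have hs_inf := tendsto_atBot_sup_atTop_of_div_tendsto hy ht hs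
  refine ((hlim.comp hs_inf).mul ((continuousAt_oddRpow hy).tendsto.comp hs)).congr' ?_
  filter_upwards [ht.eventually_gt_atTop 0,
    hs_inf.eventually (eventually_sup.2 ⟨eventually_ne_atBot 0, eventually_ne_atTop 0⟩)]
    with i hti hsi
  simp only [Function.comp_apply, oddRpow_div hti]
  field_simp [oddRpow_ne_zero hsi]

lemma tendsto_div_rpow_of_div_tendsto {f : ℝ → ℝ} {p c η : ℝ} (hp : 1 < p)
    (hgrowth : ∀ x, |f x| ≤ c * (1 + |x| ^ (p - 1)))
    (hlim : Tendsto (fun x => f x / oddRpow p x) (atBot ⊔ atTop) (𝓝 η))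
    (ht : Tendsto t l atTop) (hs : Tendsto (fun i => s i / t i) l (𝓝 y)) :
    Tendsto (fun i => f (s i) / t i ^ (p - 1)) l (𝓝 (η * oddRpow p y)) := by
  rcases eq_or_ne y 0 with rfl | hy
  · simpa using tendsto_div_rpow_zero_of_growth (sub_pos.2 hp) hgrowth ht hs
  · exact tendsto_div_rpow_of_div_tendsto_ne_zero hlim hy ht hs

end Rescaled

section Integral

variable {Ω : Type*} [MeasurableSpace Ω] {μ : Measure Ω}

lemma MeasureTheory.MemLp.abs_rpow {w : Ω → ℝ} {p r : ℝ} (hr : 0 < r) (hw : MemLp w (ENNReal.ofReal p) μ) :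
    MemLp (fun z => |w z| ^ r) (ENNReal.ofReal (p / r)) μ := by
  have := hw.norm_rpow_div (ENNReal.ofReal r)
  rwa [ENNReal.toReal_ofReal hr.le, ← ENNReal.ofReal_div_of_pos hr] at this

lemma tendsto_integral_abs_rpow_of_dominated {ι : Type*} {l : Filter ι} [l.IsCountablyGenerated]
    {F : ι → Ω → ℝ} {g : Ω → ℝ} {q : ℝ} (hq : 0 < q)
    (hF : ∀ᶠ i in l, AEStronglyMeasurable (F i) μ) (hg : MemLp g (ENNReal.ofReal q) μ)
    (hbound : ∀ᶠ i in l, ∀ᵐ z ∂μ, |F i z| ≤ g z)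
    (hlim : ∀ᵐ z ∂μ, Tendsto (fun i => F i z) l (𝓝 0)) :
    Tendsto (fun i => ∫ z, |F i z| ^ q ∂μ) l (𝓝 0) := by
  have hint : Integrable (fun z => ‖g z‖ ^ q) μ := by
    simpa [ENNReal.toReal_ofReal hq.le] using
      hg.integrable_norm_rpow (by simpa using hq) ENNReal.ofReal_ne_top
  have key := tendsto_integral_filter_of_dominated_convergence (f := fun _ => (0 : ℝ)) _
    (hF.mono fun i hi => hi.norm.aemeasurable.pow_const q |>.aestronglyMeasurable)
    (hbound.mono fun i hi => hi.mono fun z hz => by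
      rw [Real.norm_eq_abs, abs_of_nonneg (by positivity)]
      exact Real.rpow_le_rpow (abs_nonneg _) (hz.trans (le_abs_self _)) hq.le) hint
    (hlim.mono fun z hz => by simpa [Real.zero_rpow hq.ne'] using hz.abs.rpow_const (Or.inr hq.le))
  simpa using key

end Integral

theorem rescaled_nemytskii_Lp'_convergence_general {Ω : Type*} [MeasurableSpace Ω]
    (μ : Measure Ω) [IsFiniteMeasure μ]
    (p p' η c : ℝ) (hp : 1 < p) (hp' : p' = p / (p - 1)) (hc : 0 < c)
    (f : ℝ → ℝ) (hf : Continuous f)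
    (hgrowth : ∀ x : ℝ, |f x| ≤ c * (1 + |x| ^ (p - 1)))
    (hlimtop : Tendsto (fun x : ℝ => f x / x ^ (p - 1)) atTop (nhds η))
    (hlimbot : Tendsto (fun x : ℝ => f x / (|x| ^ (p - 2) * x)) atBot (nhds η))
    (u : ℕ → Ω → ℝ) (hu : ∀ n, Measurable (u n))
    (t : ℕ → ℝ) (htlim : Tendsto t atTop atTop)
    (y : Ω → ℝ) (hy : Measurable y)
    (w : Ω → ℝ) (hw : MemLp w (ENNReal.ofReal p) μ)
    (hconv : ∀ᵐ z ∂μ, Tendsto (fun n => u n z / t n) atTop (nhds (y z)))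
    (hdom : ∀ᵐ z ∂μ, ∀ n, |u n z / t n| ≤ w z) :
    Tendsto (fun n => ∫ z,
        |f (u n z) / (t n) ^ (p - 1) - η * (|y z| ^ (p - 2) * y z)| ^ p' ∂μ)
      atTop (nhds 0) := by
  subst hp'
  have hp1 : 0 < p - 1 := by linarith
  have hyw : ∀ᵐ z ∂μ, |y z| ≤ w z := by
    filter_upwards [hconv, hdom] with z hz hdz
    exact le_of_tendsto hz.abs (Eventually.of_forall hdz)
  have hlim := tendsto_div_oddRpow_atBot_sup_atTop hlimtop hlimbot
  have hg : MemLp (fun z => c + (c + |η|) * |w z| ^ (p - 1)) (ENNReal.ofReal (p / (p - 1))) μ :=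
    (memLp_const c).add ((hw.abs_rpow hp1).const_mul (c + |η|))
  refine tendsto_integral_abs_rpow_of_dominated (by positivity)
    (F := fun n z => f (u n z) / t n ^ (p - 1) - η * oddRpow p (y z))
    (Eventually.of_forall fun n => ?_) hg ?_ ?_
  · have hfu : Measurable fun z => f (u n z) := hf.measurable.comp (hu n)
    exact (by unfold oddRpow; fun_prop : Measurable _).aestronglyMeasurable
  · filter_upwards [htlim.eventually_ge_atTop 1] with n htn
    filter_upwards [hdom, hyw] with z hdz hyz
    exact abs_div_rpow_sub_le_of_growth hp hc.le hgrowth htn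
      ((hdz n).trans (le_abs_self _)) (hyz.trans (le_abs_self _))
  · filter_upwards [hconv] with z hz
    simpa using (tendsto_div_rpow_of_div_tendsto hp hgrowth hlim htlim hz).sub_const
      (η * oddRpow p (y z))

/-- Convergence of rescaled Nemytskii compositions (steps (40) and (60) of the paper):
if `f` is continuous with `(p−1)`-growth and `f(x)/(|x|^{p−2}x) → η` as `x → ±∞`,
`tₙ → +∞`, `uₙ/tₙ → y` a.e. with an `L^p` dominating function `w`, then
`f(uₙ)/tₙ^{p−1} → η |y|^{p−2} y` in `L^{p'}(μ)`. -/
theorem rescaled_nemytskii_Lp'_convergence {Ω : Type*} [MeasurableSpace Ω]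
    (μ : Measure Ω) [IsFiniteMeasure μ]
    (p p' η c : ℝ) (hp : 1 < p) (hp' : p' = p / (p - 1)) (hc : 0 < c)
    (f : ℝ → ℝ) (hf : Continuous f)
    (hgrowth : ∀ x : ℝ, |f x| ≤ c * (1 + |x| ^ (p - 1)))
    (hlimtop : Tendsto (fun x : ℝ => f x / x ^ (p - 1)) atTop (nhds η))
    (hlimbot : Tendsto (fun x : ℝ => f x / (|x| ^ (p - 2) * x)) atBot (nhds η))
    (u : ℕ → Ω → ℝ) (hu : ∀ n, Measurable (u n))
    (t : ℕ → ℝ) (ht : ∀ n, 0 < t n) (htlim : Tendsto t atTop atTop)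
    (y : Ω → ℝ) (hy : Measurable y)
    (w : Ω → ℝ) (hw : MemLp w (ENNReal.ofReal p) μ)
    (hconv : ∀ᵐ z ∂μ, Tendsto (fun n => u n z / t n) atTop (nhds (y z)))
    (hdom : ∀ᵐ z ∂μ, ∀ n, |u n z / t n| ≤ w z) :
    Tendsto (fun n => ∫ z,
        |f (u n z) / (t n) ^ (p - 1) - η * (|y z| ^ (p - 2) * y z)| ^ p' ∂μ)
      atTop (nhds 0) :=
  rescaled_nemytskii_Lp'_convergence_general μ p p' η c hp hp' hc f hf hgrowth hlimtop hlimbot u hu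
    t htlim y hy w hw hconv hdom
end
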